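/- arXiv:2303.01039 — 2 statements merged into one kernel-verified Lean document; each statement's English description precedes it below -/
import Mathlib

section
/- Let (p_n)_{n≥1} be the strictly increasing enumeration of all primes, and let M be the submonoid of (ℚ, +) generated by the set {1/(p_n p_{n+2}) : n ∈ ℕ, n ≥ 1}. Then M is atomic with set of atoms exactly {1/(p_n p_{n+2}) : n ≥ 1}, and M does not satisfy the ACCP: the sequence (1/p_n + 1/p_{n+1} + M)_{n≥1} is an ascending chain of principal ideals of M that does not stabilize. -/
/-- A subset `S` of an abelian group is a submonoid if it contains `0`
and is closed under addition. -/
def IsSubmonoidSet {G : Type*} [AddCommGroup G] (S : Set G) : Prop :=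
  (0 : G) ∈ S ∧ ∀ a ∈ S, ∀ b ∈ S, a + b ∈ S

/-- `a` is an atom of the (sub)monoid `S`: it belongs to `S`, is not invertible in `S`,
and whenever `a = b + c` with `b, c ∈ S`, one of `b`, `c` is invertible in `S`. -/
def IsAtomIn {G : Type*} [AddCommGroup G] (S : Set G) (a : G) : Prop :=
  a ∈ S ∧ -a ∉ S ∧ ∀ b ∈ S, ∀ c ∈ S, a = b + c → (-b ∈ S ∨ -c ∈ S)

/-- `S` is atomic: every non-invertible element of `S` is a finite sum of atoms of `S`. -/
def IsAtomicSet {G : Type*} [AddCommGroup G] (S : Set G) : Prop :=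
  ∀ a ∈ S, -a ∉ S → ∃ l : Multiset G, (∀ x ∈ l, IsAtomIn S x) ∧ l.sum = a

/-- The principal ideal `b + S` of the (sub)monoid `S`. -/
def setIdeal {G : Type*} [AddCommGroup G] (S : Set G) (b : G) : Set G :=
  {x | ∃ m ∈ S, x = b + m}

/-- `S` satisfies the ACCP: every ascending chain of principal ideals of `S` stabilizes. -/
def SatisfiesACCPSet {G : Type*} [AddCommGroup G] (S : Set G) : Prop :=
  ∀ b : ℕ → G, (∀ n, b n ∈ S) →
    (∀ n, setIdeal S (b n) ⊆ setIdeal S (b (n + 1))) →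
    ∃ N, ∀ n, N ≤ n → setIdeal S (b n) = setIdeal S (b N)

/-- The strictly increasing enumeration of all primes, `1`-indexed: for `n ≥ 1`,
`nthPrime n = Nat.nth Nat.Prime (n - 1)` is the `n`-th prime. -/
noncomputable def nthPrime (n : ℕ) : ℕ := Nat.nth Nat.Prime (n - 1)

/-- The generating set `{1/(p_n p_{n+2}) : n ≥ 1}`. -/
noncomputable def genSet4 : Set ℚ :=
  {q | ∃ n : ℕ, 1 ≤ n ∧ q = 1 / ((nthPrime n : ℚ) * (nthPrime (n + 2) : ℚ))}

/-- The submonoid of `(ℚ, +)` generated by `{1/(p_n p_{n+2}) : n ≥ 1}`. -/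
noncomputable def monoid4 : Set ℚ := ↑(AddSubmonoid.closure genSet4)

/-! Every element of the monoid is nonnegative, so the monoid is reduced and its atoms are among
the generators `g n = 1 / (p n * p (n + 2))`. A decomposition of `g n` into two nonzero parts
yields an integer relation `∑ j ≤ m, z j * g j = 0` with all `z j ≥ -1`, not all zero.
Only `g m` involves the prime `p (m + 2)`, so `p (m + 2) ∣ z m`; since
`p (m + 2) * g m = 1 / p m = p (m - 2) * g (m - 2)`, the top term can be moved two places down,
and induction on `m` shows that no such relation exists (for `m < 2` a size comparison decides).
The chain of ideals is strictly ascending because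
`(1/p n + 1/p (n+1)) - (1/p (n+1) + 1/p (n+2)) = (p (n + 2) - p n) * g n`
is a nonzero element of the monoid. -/

section Ideals

variable {G : Type*} [AddCommGroup G]

theorem setIdeal_subset_setIdeal {S : AddSubmonoid G} {x y : G} (h : x - y ∈ S) :
    setIdeal S x ⊆ setIdeal S y := by
  rintro _ ⟨m, hm, rfl⟩
  exact ⟨x - y + m, S.add_mem h hm, by abel⟩

theorem setIdeal_ssubset_setIdeal {S : AddSubmonoid G} (hS : ∀ z ∈ S, -z ∈ S → z = 0)
    {x y : G} (h : x - y ∈ S) (hne : x ≠ y) : setIdeal S x ⊂ setIdeal S y := by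
  refine (Set.ssubset_iff_of_subset (setIdeal_subset_setIdeal h)).2
    ⟨y, ⟨0, S.zero_mem, by simp⟩, ?_⟩
  rintro ⟨m, hm, hym⟩
  have hm' : -m = x - y := by rw [hym]; abel
  have hm0 : m = 0 := hS m hm (hm' ▸ h)
  exact hne (sub_eq_zero.1 (by rw [← hm', hm0, neg_zero]))

theorem not_satisfiesACCPSet_of_ssubset {S : Set G} (b : ℕ → G) (hb : ∀ n, b n ∈ S)
    (hchain : ∀ n, setIdeal S (b n) ⊂ setIdeal S (b (n + 1))) : ¬ SatisfiesACCPSet S := by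
  intro hS
  obtain ⟨N, hN⟩ := hS b hb fun n => (hchain n).subset
  exact (hchain N).ne (hN (N + 1) N.le_succ).symm

end Ideals

namespace AddSubmonoid

theorem exists_add_of_mem_closure_of_ne_zero {M : Type*} [AddCommMonoid M] {T : Set M} {x : M}
    (hx : x ∈ closure T) (hx0 : x ≠ 0) : ∃ t ∈ T, ∃ y ∈ closure T, x = t + y := by
  obtain ⟨l, hlT, rfl⟩ := exists_multiset_of_mem_closure hx
  obtain ⟨t, ht⟩ := Multiset.exists_mem_of_ne_zero (show l ≠ 0 by rintro rfl; exact hx0 rfl)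
  obtain ⟨l', rfl⟩ := Multiset.exists_cons_of_mem ht
  exact ⟨t, hlT t (Multiset.mem_cons_self t l'), l'.sum,
    multiset_sum_mem _ _ fun y hy => subset_closure (hlT y (Multiset.mem_cons_of_mem hy)),
    Multiset.sum_cons t l'⟩

theorem isAtomicSet_closure {G : Type*} [AddCommGroup G] {T : Set G}
    (hT : ∀ t ∈ T, IsAtomIn (closure T : Set G) t) : IsAtomicSet (closure T : Set G) := by
  intro a ha _
  obtain ⟨l, hlT, rfl⟩ := exists_multiset_of_mem_closure ha
  exact ⟨l, fun x hx => hT x (hlT x hx), rfl⟩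

section Positive

variable {G : Type*} [AddCommGroup G] [PartialOrder G] [IsOrderedAddMonoid G] {T : Set G}

theorem nonneg_of_mem_closure (hT : ∀ t ∈ T, 0 < t) {x : G} (hx : x ∈ closure T) :
    0 ≤ x := by
  induction hx using closure_induction with
  | mem t ht => exact (hT t ht).le
  | zero => exact le_rfl
  | add _ _ _ _ ha hb => exact add_nonneg ha hb

theorem eq_zero_of_neg_mem_closure (hT : ∀ t ∈ T, 0 < t) {x : G} (hx : x ∈ closure T)
    (hnx : -x ∈ closure T) : x = 0 :=
  le_antisymm (neg_nonneg.1 (nonneg_of_mem_closure hT hnx)) (nonneg_of_mem_closure hT hx)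

theorem isAtomIn_closure (hT : ∀ t ∈ T, 0 < t) {t : G} (ht : t ∈ T)
    (hirred : ∀ s ∈ T, ∀ y ∈ closure T, t = s + y → y = 0) :
    IsAtomIn (closure T : Set G) t := by
  refine ⟨subset_closure ht,
    fun hnt => (hT t ht).ne' (eq_zero_of_neg_mem_closure hT (subset_closure ht) hnt),
    fun b hb c hc hbc => ?_⟩
  by_cases hb0 : b = 0
  · exact Or.inl (by simp [hb0])
  obtain ⟨s, hs, y, hy, rfl⟩ := exists_add_of_mem_closure_of_ne_zero hb hb0
  have hyc : y + c = 0 := hirred s hs (y + c) (add_mem hy hc) (by rw [hbc, add_assoc])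
  have hc0 : c = 0 := le_antisymm
    (hyc ▸ le_add_of_nonneg_left (nonneg_of_mem_closure hT hy)) (nonneg_of_mem_closure hT hc)
  exact Or.inr (by simp [hc0])

theorem mem_of_isAtomIn_closure (hT : ∀ t ∈ T, 0 < t) {a : G}
    (ha : IsAtomIn (closure T : Set G) a) : a ∈ T := by
  obtain ⟨haT, hna, hsplit⟩ := ha
  obtain ⟨t, ht, y, hy, rfl⟩ := exists_add_of_mem_closure_of_ne_zero haT
    (by rintro rfl; simp at hna)
  rcases hsplit t (subset_closure ht) y hy rfl with hnt | hny
  · exact absurd (eq_zero_of_neg_mem_closure hT (subset_closure ht) hnt) (hT t ht).ne'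
  · rwa [eq_zero_of_neg_mem_closure hT hy hny, add_zero]

end Positive

end AddSubmonoid

namespace SkipPrimeMonoid

open Finset

variable {P : ℕ → ℕ}

def gen (P : ℕ → ℕ) (n : ℕ) : ℚ := 1 / (P n * P (n + 2))

theorem cast_pos (hP : ∀ n, (P n).Prime) (n : ℕ) : (0 : ℚ) < P n := by
  exact_mod_cast (hP n).pos

theorem gen_pos (hP : ∀ n, (P n).Prime) (n : ℕ) : 0 < gen P n :=
  div_pos one_pos (mul_pos (cast_pos hP n) (cast_pos hP (n + 2)))

theorem prime_mul_gen (hP : ∀ n, (P n).Prime) (n : ℕ) :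
    (P n : ℚ) * gen P n = 1 / P (n + 2) := by
  have := (cast_pos hP n).ne'
  rw [gen]
  field_simp

theorem prime_add_two_mul_gen (hP : ∀ n, (P n).Prime) (n : ℕ) :
    (P (n + 2) : ℚ) * gen P n = 1 / P n := by
  have := (cast_pos hP (n + 2)).ne'
  rw [gen]
  field_simp

theorem padicNorm_gen (hP : ∀ n, (P n).Prime) (hinj : P.Injective) {k n : ℕ} (hn : n ≠ k)
    (hn2 : n + 2 ≠ k) : padicNorm (P k) (gen P n) = 1 := by
  have := Fact.mk (hP k); have := Fact.mk (hP n); have := Fact.mk (hP (n + 2))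
  rw [gen, padicNorm.div, padicNorm.mul, padicNorm.padicNorm_of_prime_of_ne (hinj.ne hn.symm),
    padicNorm.padicNorm_of_prime_of_ne (hinj.ne hn2.symm)]
  norm_num

theorem padicNorm_gen_top (hP : ∀ n, (P n).Prime) (hinj : P.Injective) (n : ℕ) :
    padicNorm (P (n + 2)) (gen P n) = P (n + 2) := by
  have := Fact.mk (hP n); have := Fact.mk (hP (n + 2))
  rw [gen, padicNorm.div, padicNorm.mul,
    padicNorm.padicNorm_of_prime_of_ne (hinj.ne (show n + 2 ≠ n by omega)),
    padicNorm.padicNorm_p_of_prime]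
  norm_num

theorem dvd_top_of_sum_eq_zero (hP : ∀ n, (P n).Prime) (hinj : P.Injective) (m : ℕ)
    (z : ℕ → ℤ) (h : ∑ j ∈ range (m + 1), z j * gen P j = 0) :
    (P (m + 2) : ℤ) ∣ z m := by
  have := Fact.mk (hP (m + 2))
  have htop : z m * gen P m = -∑ j ∈ range m, z j * gen P j := by
    rw [sum_range_succ] at h
    linarith
  have hle : padicNorm (P (m + 2)) (z m) * P (m + 2) ≤ 1 := by
    rw [← padicNorm_gen_top hP hinj, ← padicNorm.mul, htop, padicNorm.neg]
    refine padicNorm.sum_le' (fun j hj => ?_) zero_le_one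
    have hj : j < m := mem_range.1 hj
    rw [padicNorm.mul, padicNorm_gen hP hinj (by omega) (by omega), mul_one]
    exact padicNorm.of_int _
  have hq : (1 : ℚ) < P (m + 2) := by exact_mod_cast (hP _).one_lt
  rw [← padicNorm.int_lt_one_iff]
  nlinarith [padicNorm.nonneg (p := P (m + 2)) (z m)]

theorem eq_zero_of_sum_eq_neg_div_of_lt_two (hP : ∀ n, (P n).Prime) (hmono : StrictMono P)
    {k : ℕ} (hk : k < 2) (z : ℕ → ℤ) (hz : ∀ j, -1 ≤ z j) {t : ℤ} (ht : 0 ≤ t)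
    (h : ∑ j ∈ range k, z j * gen P j = -(t / P k)) : t = 0 := by
  have hgen : gen P 0 < 1 / P k := by
    have h0 : (1 : ℚ) ≤ P 0 := by exact_mod_cast (hP 0).one_lt.le
    have h2 : (P k : ℚ) < P 2 := by exact_mod_cast hmono (show k < 2 from hk)
    exact one_div_lt_one_div_of_lt (cast_pos hP k) (by nlinarith [cast_pos hP 2])
  have hle : (t : ℚ) / P k ≤ gen P 0 := by
    interval_cases k
    · simp only [range_zero, sum_empty] at h
      linarith [gen_pos hP 0]
    · rw [sum_range_one] at h
      have hz0 : (-1 : ℚ) ≤ z 0 := by exact_mod_cast hz 0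
      nlinarith [gen_pos hP 0]
  have ht1 : (t : ℚ) < 1 :=
    (div_lt_div_iff_of_pos_right (cast_pos hP k)).1 (by linarith)
  have : t < 1 := by exact_mod_cast ht1
  omega

theorem sum_add_ite_mul_gen (hP : ∀ n, (P n).Prime) (l : ℕ) (z : ℕ → ℤ) (t : ℤ) :
    ∑ j ∈ range (l + 2), ((z j + if j = l then P l * t else 0 : ℤ) : ℚ) * gen P j
      = ∑ j ∈ range (l + 2), z j * gen P j + t / P (l + 2) := by
  simp only [Int.cast_add, add_mul, sum_add_distrib, apply_ite (Int.cast (R := ℚ)), ite_mul,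
    Int.cast_zero, zero_mul, sum_ite_eq', mem_range, show l < l + 2 by omega, if_true,
    Int.cast_mul, Int.cast_natCast]
  rw [mul_right_comm, prime_mul_gen hP, one_div_mul_eq_div]

theorem eq_zero_of_sum_eq_zero (hP : ∀ n, (P n).Prime) (hmono : StrictMono P) (m : ℕ)
    (z : ℕ → ℤ) (hz : ∀ j, -1 ≤ z j) (h : ∑ j ∈ range m, z j * gen P j = 0) :
    ∀ j < m, z j = 0 := by
  induction m using Nat.strong_induction_on generalizing z with | _ m ih => ?_
  rcases m with _ | k
  · simp
  obtain ⟨t, ht⟩ := dvd_top_of_sum_eq_zero hP hmono.injective k z h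
  have hrest : ∑ j ∈ range k, z j * gen P j = -(t / P k) := by
    have hk : (z k : ℚ) * gen P k = t / P k := by
      rw [ht, Int.cast_mul, Int.cast_natCast, mul_right_comm, prime_add_two_mul_gen hP,
        one_div_mul_eq_div]
    rw [sum_range_succ, hk] at h
    linarith
  have htop : z k = 0 := by
    have hq : (2 : ℤ) ≤ P (k + 2) := by exact_mod_cast (hP _).two_le
    have ht_nonneg : 0 ≤ t := by nlinarith [hz k]
    suffices t = 0 by rw [ht, this, mul_zero]
    rcases lt_or_ge k 2 with hk | hk
    · exact eq_zero_of_sum_eq_neg_div_of_lt_two hP hmono hk z hz ht_nonneg hrest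
    obtain ⟨l, rfl⟩ : ∃ l, k = l + 2 := ⟨k - 2, by omega⟩
    -- `P (l + 4) * gen (l + 2) = 1 / P (l + 2) = P l * gen l`: move the top term down to `l`.
    have hshift := ih (l + 2) (by omega) (fun j => z j + if j = l then P l * t else 0)
      (fun j => by split_ifs <;> nlinarith [hz j, (hP l).pos])
      (by rw [sum_add_ite_mul_gen hP, hrest]; ring) l (by omega)
    have hl : (2 : ℤ) ≤ P l := by exact_mod_cast (hP l).two_le
    simp only [if_true] at hshift
    nlinarith [hz l]
  intro j hj
  rcases Nat.lt_succ_iff_lt_or_eq.1 hj with hj | rfl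
  · refine ih k k.lt_succ_self z hz ?_ j hj
    rwa [sum_range_succ, htop, Int.cast_zero, zero_mul, add_zero] at h
  · exact htop

def monoid (P : ℕ → ℕ) : AddSubmonoid ℚ := AddSubmonoid.closure (Set.range (gen P))

theorem pos_of_mem_range_gen (hP : ∀ n, (P n).Prime) : ∀ x ∈ Set.range (gen P), 0 < x := by
  rintro _ ⟨n, rfl⟩
  exact gen_pos hP n

theorem gen_mem_monoid (n : ℕ) : gen P n ∈ monoid P :=
  AddSubmonoid.subset_closure (Set.mem_range_self n)

theorem eq_of_gen_add_mem_eq_gen (hP : ∀ n, (P n).Prime) (hmono : StrictMono P) {i n : ℕ}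
    {x : ℚ} (hx : x ∈ monoid P) (h : gen P i + x = gen P n) : i = n := by
  classical
  obtain ⟨c, rfl⟩ := AddSubmonoid.mem_closure_range_iff.1 hx
  obtain ⟨m, hm⟩ := exists_nat_subset_range (c.support ∪ {i, n})
  have hc : c.sum (fun j k => k • gen P j) = ∑ j ∈ range m, (c j : ℚ) * gen P j := by
    rw [Finsupp.sum_of_support_subset c (union_subset_left hm) (fun j k => k • gen P j)
      (fun j _ => zero_nsmul _)]
    simp only [nsmul_eq_mul]
  have hi : i < m := mem_range.1 (hm (by simp))
  have hn : n < m := mem_range.1 (hm (by simp))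
  set z : ℕ → ℤ := fun j => c j + (if j = i then 1 else 0) - (if j = n then 1 else 0)
  have hz : ∀ j, -1 ≤ z j := fun j => by simp only [z]; split_ifs <;> omega
  have hsum : ∑ j ∈ range m, z j * gen P j = 0 := by
    simp only [z, Int.cast_sub, Int.cast_add, Int.cast_natCast, apply_ite (Int.cast (R := ℚ)),
      Int.cast_one, Int.cast_zero, sub_mul, add_mul, ite_mul, one_mul, zero_mul,
      sum_sub_distrib, sum_add_distrib, sum_ite_eq', mem_range, hi, hn, if_true, ← hc]
    linarith
  have hzi := eq_zero_of_sum_eq_zero hP hmono m z hz hsum i hi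
  by_contra hin
  simp only [z, if_true, if_neg hin] at hzi
  omega

theorem isAtomIn_gen (hP : ∀ n, (P n).Prime) (hmono : StrictMono P) (n : ℕ) :
    IsAtomIn (monoid P : Set ℚ) (gen P n) := by
  refine AddSubmonoid.isAtomIn_closure (pos_of_mem_range_gen hP) (Set.mem_range_self n) ?_
  rintro _ ⟨i, rfl⟩ y hy h
  obtain rfl := eq_of_gen_add_mem_eq_gen hP hmono hy h.symm
  linarith

theorem one_div_mem_monoid (hP : ∀ n, (P n).Prime) (n : ℕ) : 1 / (P n : ℚ) ∈ monoid P := by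
  rw [← prime_add_two_mul_gen hP, ← nsmul_eq_mul]
  exact AddSubmonoid.nsmul_mem _ (gen_mem_monoid n) _

theorem one_div_sub_one_div_mem_monoid (hP : ∀ n, (P n).Prime) (hmono : StrictMono P) (n : ℕ) :
    1 / (P n : ℚ) - 1 / P (n + 2) ∈ monoid P := by
  have hle : P n ≤ P (n + 2) := (hmono (by omega : n < n + 2)).le
  rw [← prime_add_two_mul_gen hP, ← prime_mul_gen hP, ← sub_mul, ← Nat.cast_sub hle,
    ← nsmul_eq_mul]
  exact AddSubmonoid.nsmul_mem _ (gen_mem_monoid n) _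

theorem setIdeal_ssubset_setIdeal_succ (hP : ∀ n, (P n).Prime) (hmono : StrictMono P) (n : ℕ) :
    setIdeal (monoid P : Set ℚ) (1 / (P n : ℚ) + 1 / P (n + 1)) ⊂
      setIdeal (monoid P : Set ℚ) (1 / (P (n + 1) : ℚ) + 1 / P (n + 2)) := by
  refine setIdeal_ssubset_setIdeal
    (fun x hx hnx => AddSubmonoid.eq_zero_of_neg_mem_closure (pos_of_mem_range_gen hP) hx hnx)
    (by rw [add_sub_add_comm, sub_add_sub_cancel]; exact one_div_sub_one_div_mem_monoid hP hmono n)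
    ?_
  have hlt : (P n : ℚ) < P (n + 2) := by exact_mod_cast hmono (by omega : n < n + 2)
  have := one_div_lt_one_div_of_lt (cast_pos hP n) hlt
  intro h
  linarith

end SkipPrimeMonoid

open SkipPrimeMonoid in
theorem genSet4_eq_range : genSet4 = Set.range (gen (Nat.nth Nat.Prime)) := by
  ext q
  constructor
  · rintro ⟨n, hn, rfl⟩
    obtain ⟨k, rfl⟩ := Nat.exists_eq_add_of_le' hn
    exact ⟨k, by simp [gen, nthPrime]⟩
  · rintro ⟨k, rfl⟩
    exact ⟨k + 1, by omega, by simp [gen, nthPrime]⟩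

open SkipPrimeMonoid in
/-- The monoid generated by `{1/(p_n p_{n+2}) : n ≥ 1}` is atomic with atoms
exactly the generators, and it does not satisfy the ACCP: `(1/p_n + 1/p_{n+1} + M)_{n ≥ 1}` is
an ascending chain of principal ideals that does not stabilize. -/
theorem monoid4_atomic_not_ACCP :
    IsAtomicSet monoid4 ∧
    {a : ℚ | IsAtomIn monoid4 a} = genSet4 ∧
    (∀ n : ℕ, 1 ≤ n →
      ((1 : ℚ) / (nthPrime n : ℚ) + 1 / (nthPrime (n + 1) : ℚ)) ∈ monoid4 ∧
      setIdeal monoid4 ((1 : ℚ) / (nthPrime n : ℚ) + 1 / (nthPrime (n + 1) : ℚ)) ⊂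
        setIdeal monoid4 ((1 : ℚ) / (nthPrime (n + 1) : ℚ) + 1 / (nthPrime (n + 2) : ℚ))) ∧
    ¬ SatisfiesACCPSet monoid4 := by
  have hP : ∀ n, (Nat.nth Nat.Prime n).Prime := Nat.prime_nth_prime
  have hmono : StrictMono (Nat.nth Nat.Prime) := Nat.nth_strictMono Nat.infinite_setOfPred_prime
  have hatoms : ∀ a ∈ Set.range (gen (Nat.nth Nat.Prime)),
      IsAtomIn (monoid (Nat.nth Nat.Prime) : Set ℚ) a := by
    rintro _ ⟨n, rfl⟩
    exact isAtomIn_gen hP hmono n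
  have hmem : ∀ n, 1 / (Nat.nth Nat.Prime n : ℚ) + 1 / Nat.nth Nat.Prime (n + 1) ∈
      monoid (Nat.nth Nat.Prime) :=
    fun n => add_mem (one_div_mem_monoid hP n) (one_div_mem_monoid hP (n + 1))
  have hmonoid4 : monoid4 = (monoid (Nat.nth Nat.Prime) : Set ℚ) := by
    rw [monoid4, genSet4_eq_range]
    rfl
  rw [hmonoid4, genSet4_eq_range]
  refine ⟨AddSubmonoid.isAtomicSet_closure hatoms,
    Set.ext fun a => ⟨AddSubmonoid.mem_of_isAtomIn_closure (pos_of_mem_range_gen hP), hatoms a⟩,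
    fun n hn => ?_,
    not_satisfiesACCPSet_of_ssubset _ hmem (setIdeal_ssubset_setIdeal_succ hP hmono)⟩
  obtain ⟨k, rfl⟩ := Nat.exists_eq_add_of_le' hn
  exact ⟨hmem k, setIdeal_ssubset_setIdeal_succ hP hmono k⟩
end

section
/- Let M be the submonoid of (ℚ, +) generated by {1/p : p prime}, and let q be a prime. Then every subring of the monoid algebra 𝔽_q[M] satisfies the ACCP; in particular, 𝔽_q[M] is an integral domain satisfying the ACCP. -/
/-!
Every `x ∈ M` can be written `x = n + ∑ c_p / p` with `n ∈ ℕ` and digits `0 ≤ c_p < p`: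
denominators in `M` are squarefree, and `c_p` is the residue of `p * x` modulo `p`. Adding two
such expansions adds the digits prime by prime with carries, and each carry raises the integer
part. Hence `x ↦ (n, ∑ c_p)`, ordered lexicographically, strictly increases from `x` to `x + e`
whenever `0 ≠ e ∈ M`, so strict divisibility in `M` is well founded.

In `𝔽_q[M]` the leading exponent of a product is the sum of the leading exponents. If `a = b * x`
in a subring with `x` not a unit there, then `x` is not a constant: nonzero constants satisfy
`c ^ (q - 1) = 1`, so they are units in every subring. Hence the leading exponent of `b` strictly
divides that of `a` in `M`, and strict divisibility in every subring is well founded, which is the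
ACCP.
-/

/-- A commutative ring (intended: an integral domain) is atomic if every nonzero nonunit
is a finite product of irreducible elements. -/
def AtomicDomain (A : Type*) [CommRing A] : Prop :=
  ∀ a : A, a ≠ 0 → ¬ IsUnit a → ∃ l : Multiset A, (∀ x ∈ l, Irreducible x) ∧ l.prod = a

/-- A commutative ring satisfies the ACCP if every ascending chain of principal ideals
stabilizes. -/
def RingACCP (A : Type*) [CommRing A] : Prop :=
  ∀ f : ℕ → A, (∀ n, Ideal.span {f n} ≤ Ideal.span {f (n + 1)}) →
    ∃ N, ∀ n, N ≤ n → Ideal.span {f n} = Ideal.span {f N}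

/-- The submonoid of `(ℚ, +)` generated by the reciprocals `1/p` of all primes `p`. -/
def primeReciprocalsMonoid : AddSubmonoid ℚ :=
  AddSubmonoid.closure {x : ℚ | ∃ p : ℕ, p.Prime ∧ x = 1 / (p : ℚ)}

theorem ringACCP_of_wfDvdMonoid (A : Type*) [CommRing A] [IsDomain A] [WfDvdMonoid A] :
    RingACCP A := by
  intro f hf
  have := WfDvdMonoid.wellFoundedLT_associates (α := A)
  obtain ⟨N, hN⟩ := WellFoundedLT.antitone_chain_condition (f := fun n => Associates.mk (f n))
    (antitone_nat_of_succ_le fun n =>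
      Associates.mk_le_mk_iff_dvd.2 (Ideal.span_singleton_le_span_singleton.1 (hf n)))
  exact ⟨N, fun n hn => (Ideal.span_singleton_eq_span_singleton.2
    (Associates.mk_eq_mk_iff_associated.1 (hN n hn))).symm⟩

namespace AddMonoidAlgebra

section PositiveExponents

variable {k M : Type*} [AddCommMonoid M] [LinearOrder M] [IsBotZeroClass M]

attribute [local instance] IsBotZeroClass.toOrderBot

lemma supDegree_mul_of_ne_zero [Semiring k] [NoZeroDivisors k] [IsOrderedCancelAddMonoid M]
    {f g : k[M]} (hf : f ≠ 0) (hg : g ≠ 0) :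
    (f * g).supDegree id = f.supDegree id + g.supDegree id :=
  supDegree_mul Function.injective_id (fun _ _ => rfl)
    (mul_ne_zero ((leadingCoeff_eq_zero Function.injective_id).not.2 hf)
      ((leadingCoeff_eq_zero Function.injective_id).not.2 hg)) hf hg

lemma eq_single_zero_of_supDegree_eq_zero [Semiring k] {f : k[M]} (h : f.supDegree id = 0) :
    f = single 0 (f.coeff 0) := by
  refine AddMonoidAlgebra.ext (Finsupp.ext fun a => ?_)
  rcases eq_or_ne a 0 with rfl | ha
  · simp
  · rw [coeff_single, Finsupp.single_apply, if_neg ha.symm]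
    exact coeff_eq_zero_of_not_le_supDegree (D := id) (h ▸ fun h0 => ha (le_antisymm h0 zero_le))

lemma pow_card_sub_one_eq_one_of_supDegree_eq_zero [Field k] [Fintype k] {f : k[M]} (hf : f ≠ 0)
    (h : f.supDegree id = 0) : f ^ (Fintype.card k - 1) = 1 := by
  have hc : f.coeff 0 ≠ 0 := fun hc =>
    hf (by rw [eq_single_zero_of_supDegree_eq_zero h, hc, single_zero])
  rw [eq_single_zero_of_supDegree_eq_zero h, single_pow, smul_zero,
    FiniteField.pow_card_sub_one_eq_one _ hc, one_def]

variable [Field k] [Fintype k] [IsOrderedCancelAddMonoid M] {A : Type*} [CommRing A]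

lemma exists_supDegree_eq_add_of_dvdNotUnit {φ : A →+* k[M]} (hφ : Function.Injective φ)
    {a b : A} (h : DvdNotUnit a b) (hb : b ≠ 0) :
    ∃ e ≠ 0, (φ b).supDegree id = (φ a).supDegree id + e := by
  obtain ⟨ha, x, hx, rfl⟩ := h
  have hx0 : φ x ≠ 0 := (map_ne_zero_iff φ hφ).2 (right_ne_zero_of_mul hb)
  refine ⟨(φ x).supDegree id, fun h0 => hx ?_, ?_⟩
  · refine IsUnit.of_pow_eq_one (n := Fintype.card k - 1) (hφ ?_) ?_
    · rw [map_pow, map_one, pow_card_sub_one_eq_one_of_supDegree_eq_zero hx0 h0]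
    · have := Fintype.one_lt_card (α := k); omega
  · rw [map_mul]
    exact supDegree_mul_of_ne_zero ((map_ne_zero_iff φ hφ).2 ha) hx0

theorem wfDvdMonoid_of_injective (φ : A →+* k[M]) (hφ : Function.Injective φ)
    (hM : WellFounded fun a b : M => ∃ e ≠ 0, b = a + e) : WfDvdMonoid A := by
  have acc : ∀ a : A, a ≠ 0 → Acc DvdNotUnit a := by
    suffices ∀ m : M, ∀ a : A, (φ a).supDegree id = m → a ≠ 0 → Acc DvdNotUnit a from
      fun a => this _ a rfl
    intro m
    induction m using hM.induction with
    | _ m ih =>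
      rintro a rfl ha
      exact .intro _ fun b hb => ih _ (exists_supDegree_eq_add_of_dvdNotUnit hφ hb ha) b rfl hb.1
  exact ⟨⟨fun a => .intro _ fun b hb => acc b hb.1⟩⟩

end PositiveExponents

end AddMonoidAlgebra

namespace Rat

lemma den_eq_den_natCast_mul_mul_gcd (p : ℕ) (x : ℚ) : x.den = (p * x).den * p.gcd x.den := by
  have h := den_mul_den_eq_den_mul_gcd p x
  rwa [den_natCast, one_mul, num_natCast, Int.natAbs_mul, Int.natAbs_natCast,
    Nat.Coprime.gcd_mul_right_cancel _ x.reduced] at h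

lemma prime_dvd_den_natCast_mul_iff {p : ℕ} (hp : p.Prime) (x : ℚ) :
    p ∣ (p * x).den ↔ p * p ∣ x.den := by
  have h := den_eq_den_natCast_mul_mul_gcd p x
  by_cases hpx : p ∣ x.den
  · rw [h, Nat.gcd_eq_left hpx, Nat.mul_dvd_mul_iff_right hp.pos]
  · rw [(hp.coprime_iff_not_dvd.2 hpx).gcd_eq_one, mul_one] at h
    rw [← h]
    exact iff_of_false hpx fun h' => hpx ((dvd_mul_right p p).trans h')

lemma squarefree_den_iff (x : ℚ) :
    Squarefree x.den ↔ ∀ p : ℕ, p.Prime → ¬ p ∣ ((p : ℚ) * x).den := by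
  rw [Nat.squarefree_iff_prime_squarefree]
  exact forall₂_congr fun p hp => (not_congr (prime_dvd_den_natCast_mul_iff hp x)).symm

lemma squarefree_den_add {x y : ℚ} (hx : Squarefree x.den) (hy : Squarefree y.den) :
    Squarefree (x + y).den := by
  rw [squarefree_den_iff] at *
  intro p hp hdvd
  rw [mul_add] at hdvd
  rcases hp.dvd_mul.1 (hdvd.trans (add_den_dvd _ _)) with h | h
  exacts [hx p hp h, hy p hp h]

end Rat

namespace PrimeReciprocals

/-- The digit of `x` at `1 / p`: for prime `p`, the residue of `p * x` modulo `p`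
(`digit_eq_val_cast`); the total inverse of `ZMod p` makes it defined for every `p`. -/
def digit (p : ℕ) (x : ℚ) : ℕ := (((p * x).num : ZMod p) * ((p * x).den : ZMod p)⁻¹).val

section digit
variable {p : ℕ} [hp : Fact p.Prime]

lemma digit_eq_val_cast (x : ℚ) : digit p x = ((p * x : ℚ) : ZMod p).val := by
  rw [Rat.cast_def, div_eq_mul_inv]; rfl

lemma digit_eq_zero_of_not_dvd {x : ℚ} (h : ¬ p ∣ x.den) : digit p x = 0 := by
  rw [digit_eq_val_cast, Rat.cast_mul_of_ne_zero, Rat.cast_natCast, ZMod.natCast_self, zero_mul,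
    ZMod.val_zero]
  · simp
  · rwa [Ne, ZMod.natCast_eq_zero_iff]

lemma digit_add {x y : ℚ} (hx : Squarefree x.den) (hy : Squarefree y.den) :
    digit p (x + y) = (digit p x + digit p y) % p := by
  rw [digit_eq_val_cast, digit_eq_val_cast, digit_eq_val_cast, mul_add, Rat.cast_add_of_ne_zero,
    ZMod.val_add]
  · rw [Ne, ZMod.natCast_eq_zero_iff]; exact (Rat.squarefree_den_iff x).1 hx p hp.out
  · rw [Ne, ZMod.natCast_eq_zero_iff]; exact (Rat.squarefree_den_iff y).1 hy p hp.out

lemma digit_one_div_self : digit p (1 / p) = 1 := by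
  have : Fact (1 < p) := ⟨hp.out.one_lt⟩
  rw [digit_eq_val_cast, mul_one_div_cancel (by exact_mod_cast hp.out.ne_zero), Rat.cast_one,
    ZMod.val_one]

end digit

def fracPart (x : ℚ) : ℚ := ∑ p ∈ x.den.primeFactors, (digit p x : ℚ) / p

def digitSum (x : ℚ) : ℕ := ∑ p ∈ x.den.primeFactors, digit p x

def carry (x y : ℚ) : ℕ := ∑ p ∈ (x.den * y.den).primeFactors, (digit p x + digit p y) / p

lemma sum_primeFactors_den_eq {β : Type*} [AddCommMonoid β] (g : ℕ → ℕ → β)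
    (hg : ∀ p, g p 0 = 0) {x : ℚ} {T : Finset ℕ} (hT : x.den.primeFactors ⊆ T)
    (hTp : ∀ p ∈ T, p.Prime) :
    ∑ p ∈ x.den.primeFactors, g p (digit p x) = ∑ p ∈ T, g p (digit p x) := by
  refine Finset.sum_subset hT fun p hpT hpx => ?_
  have : Fact p.Prime := ⟨hTp p hpT⟩
  rw [digit_eq_zero_of_not_dvd fun h =>
    hpx (Nat.mem_primeFactors.2 ⟨hTp p hpT, h, x.den_ne_zero⟩), hg]

lemma fracPart_add {x y : ℚ} (hx : Squarefree x.den) (hy : Squarefree y.den) :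
    fracPart x + fracPart y = fracPart (x + y) + carry x y := by
  set T := (x.den * y.den).primeFactors
  have hTp : ∀ p ∈ T, p.Prime := fun p => Nat.prime_of_mem_primeFactors
  have hT : ∀ {z : ℚ}, z.den ∣ x.den * y.den →
      fracPart z = ∑ p ∈ T, (digit p z : ℚ) / p :=
    fun hz => sum_primeFactors_den_eq (fun p c => (c : ℚ) / p) (by simp)
      (Nat.primeFactors_mono hz (by positivity)) hTp
  rw [hT (dvd_mul_right _ _), hT (dvd_mul_left _ _), hT (Rat.add_den_dvd x y), carry,
    Nat.cast_sum, ← Finset.sum_add_distrib, ← Finset.sum_add_distrib]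
  refine Finset.sum_congr rfl fun p hpT => ?_
  have : Fact p.Prime := ⟨hTp p hpT⟩
  have hp0 : (p : ℚ) ≠ 0 := by exact_mod_cast (hTp p hpT).ne_zero
  have h : ((digit p x + digit p y) % p : ℕ) + p * ((digit p x + digit p y) / p : ℕ) =
      ((digit p x + digit p y : ℕ) : ℚ) := by
    exact_mod_cast Nat.mod_add_div _ p
  rw [digit_add hx hy]
  field_simp
  push_cast at h
  linear_combination -h

lemma digitSum_add_of_carry_eq_zero {x y : ℚ} (hx : Squarefree x.den) (hy : Squarefree y.den)
    (h : carry x y = 0) : digitSum (x + y) = digitSum x + digitSum y := by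
  set T := (x.den * y.den).primeFactors
  have hTp : ∀ p ∈ T, p.Prime := fun p => Nat.prime_of_mem_primeFactors
  have hT : ∀ {z : ℚ}, z.den ∣ x.den * y.den → digitSum z = ∑ p ∈ T, digit p z :=
    fun hz => sum_primeFactors_den_eq (fun _ c => c) (fun _ => rfl)
      (Nat.primeFactors_mono hz (by positivity)) hTp
  rw [hT (dvd_mul_right _ _), hT (dvd_mul_left _ _), hT (Rat.add_den_dvd x y),
    ← Finset.sum_add_distrib]
  refine Finset.sum_congr rfl fun p hpT => ?_
  have : Fact p.Prime := ⟨hTp p hpT⟩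
  rw [digit_add hx hy, Nat.mod_eq_of_lt]
  exact Nat.div_eq_zero_iff_lt (hTp p hpT).pos |>.1 (Finset.sum_eq_zero_iff.1 h p hpT)

lemma fracPart_nonneg (x : ℚ) : 0 ≤ fracPart x :=
  Finset.sum_nonneg fun _ _ => by positivity

lemma fracPart_eq_zero_of_digitSum_eq_zero {x : ℚ} (h : digitSum x = 0) : fracPart x = 0 :=
  Finset.sum_eq_zero fun p hp => by simp [Finset.sum_eq_zero_iff.1 h p hp]

def digitMonoid : AddSubmonoid ℚ where
  carrier := {x | Squarefree x.den ∧ ∃ n : ℕ, x = n + fracPart x}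
  add_mem' := by
    rintro x y ⟨hx, m, hm⟩ ⟨hy, n, hn⟩
    refine ⟨Rat.squarefree_den_add hx hy, m + n + carry x y, ?_⟩
    push_cast
    linear_combination hm + hn + fracPart_add hx hy
  zero_mem' := ⟨by simp, 0, by simp [fracPart]⟩

lemma one_div_prime_mem_digitMonoid {p : ℕ} (hp : p.Prime) : 1 / (p : ℚ) ∈ digitMonoid := by
  have : Fact p.Prime := ⟨hp⟩
  have hden : (1 / (p : ℚ)).den = p := by rw [one_div, Rat.inv_natCast_den_of_pos hp.pos]
  refine ⟨by rw [hden]; exact hp.prime.squarefree, 0, ?_⟩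
  rw [fracPart, hden, hp.primeFactors, Finset.sum_singleton, digit_one_div_self]
  simp

lemma primeReciprocalsMonoid_le_digitMonoid : primeReciprocalsMonoid ≤ digitMonoid :=
  AddSubmonoid.closure_le.2 fun _ ⟨_, hp, hx⟩ => hx ▸ one_div_prime_mem_digitMonoid hp

def rank (x : ℚ) : ℕ ×ₗ ℕ := toLex (⌊x - fracPart x⌋₊, digitSum x)

lemma rank_lt_rank_add {x e : ℚ} (hx : x ∈ digitMonoid) (he : e ∈ digitMonoid)
    (he0 : e ≠ 0) : rank x < rank (x + e) := by
  obtain ⟨hx, m, hm⟩ := hx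
  obtain ⟨he, n, hn⟩ := he
  have hxe : x + e - fracPart (x + e) = ((m + n + carry x e : ℕ) : ℚ) := by
    push_cast
    linear_combination hm + hn + fracPart_add hx he
  rw [rank, rank, hxe, show x - fracPart x = m by linarith, Nat.floor_natCast, Nat.floor_natCast,
    Prod.Lex.toLex_lt_toLex]
  by_cases h : n = 0 ∧ carry x e = 0
  · refine .inr ⟨by omega, ?_⟩
    have hds : digitSum e ≠ 0 := fun h0 => he0 (by
      rw [hn, h.1, fracPart_eq_zero_of_digitSum_eq_zero h0]; simp)
    rw [digitSum_add_of_carry_eq_zero hx he h.2]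
    omega
  · exact .inl (by omega)

end PrimeReciprocals

open PrimeReciprocals in
instance : IsBotZeroClass primeReciprocalsMonoid where
  isBot_zero x := by
    obtain ⟨-, n, hn⟩ := primeReciprocalsMonoid_le_digitMonoid x.2
    change (0 : ℚ) ≤ x
    rw [hn]
    exact add_nonneg n.cast_nonneg (fracPart_nonneg _)

open PrimeReciprocals in
theorem wellFounded_primeReciprocalsMonoid :
    WellFounded fun a b : primeReciprocalsMonoid => ∃ e ≠ 0, b = a + e :=
  Subrelation.wf (fun {a _} ⟨e, he, hb⟩ => hb ▸ rank_lt_rank_add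
      (primeReciprocalsMonoid_le_digitMonoid a.2) (primeReciprocalsMonoid_le_digitMonoid e.2)
      fun h => he (Subtype.ext h))
    (InvImage.wf (fun a : primeReciprocalsMonoid => rank a) wellFounded_lt)

/-- If `M` is the submonoid of `(ℚ, +)` generated by `{1/p : p prime}` and
`q` is a prime, then every subring of the monoid algebra `𝔽_q[M]` satisfies the ACCP; in
particular `𝔽_q[M]` is an integral domain satisfying the ACCP. -/
theorem prime_reciprocals_monoid_algebra_hereditary_ACCP (q : ℕ) (hq : q.Prime) :
    (∀ S : Subring (AddMonoidAlgebra (ZMod q) primeReciprocalsMonoid), RingACCP S) ∧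
      IsDomain (AddMonoidAlgebra (ZMod q) primeReciprocalsMonoid) ∧
      RingACCP (AddMonoidAlgebra (ZMod q) primeReciprocalsMonoid) := by
  have : Fact q.Prime := ⟨hq⟩
  refine ⟨fun S => ?_, inferInstance, ?_⟩
  · have := AddMonoidAlgebra.wfDvdMonoid_of_injective S.subtype Subtype.val_injective
      wellFounded_primeReciprocalsMonoid
    exact ringACCP_of_wfDvdMonoid S
  · have := AddMonoidAlgebra.wfDvdMonoid_of_injective
      (RingHom.id (AddMonoidAlgebra (ZMod q) primeReciprocalsMonoid)) Function.injective_id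
      wellFounded_primeReciprocalsMonoid
    exact ringACCP_of_wfDvdMonoid _
end
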